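/- arXiv:2205.10776 — 2 statements merged into one kernel-verified Lean document; each statement's English description precedes it below -/
import Mathlib

section
/- Let n ≥ 2, κ > 0, ε > 0, let c_1, c_2, c_3, c_4, c_5 be real constants and let m ∈ {1, …, n−1}. Define u : ℝ^n → ℝ^n by u(x) = (1/2 + G)(x_n e_m − x_m e_n) + (G^2 − 1/4)[ Σ_{i=1}^{n−1} (c_1 x_i x_m/δ) e_i + (c_2 + c_3 x_n G) e_m + ( x_m G (4κ c_1 |x'|^2/δ + c_4) + c_5 x_m x_n G^2 ) e_n ]. Then at every point x ∈ ℝ^n the divergence of u satisfies div u(x) = −(1 + (c_1 n + c_4)/4) x_m/δ + (c_1 n + 3 c_4 − 8κ c_2) x_m G^2/δ − (4κ + (3 c_5 − 4κ c_3)/4) x_m G^2 + (5 c_5 − 12κ c_3) x_m G^4, where δ = δ(x') and G = G(x). -/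
noncomputable section

/-- `δ(x') = ε + 2κ|x'|²` on `ℝ^{n-1}`. -/
def del (d : ℕ) (κ ε : ℝ) (x' : EuclideanSpace ℝ (Fin d)) : ℝ :=
  ε + 2 * κ * ‖x'‖ ^ 2

/-- `G(x) = x_n / δ(x')`, for `x = (x', x_n) ∈ ℝ^{n-1} × ℝ`. -/
def Gf (d : ℕ) (κ ε : ℝ) (x : EuclideanSpace ℝ (Fin d) × ℝ) : ℝ :=
  x.2 / del d κ ε x.1

/-- The divergence `div u = ∑_{i=1}^{n-1} ∂_i u_i + ∂_n u_n` of a vector field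
`u : ℝ^{n-1} × ℝ → ℝ^{n-1} × ℝ`. -/
def divg {d : ℕ} (u : EuclideanSpace ℝ (Fin d) × ℝ → EuclideanSpace ℝ (Fin d) × ℝ)
    (x : EuclideanSpace ℝ (Fin d) × ℝ) : ℝ :=
  (∑ i : Fin d, (fderiv ℝ u x (EuclideanSpace.single i 1, 0)).1 i)
    + (fderiv ℝ u x (0, 1)).2

/-- The auxiliary "rotational" velocity field
`u(x) = (1/2 + G)(x_n e_m − x_m e_n) + (G² − 1/4)[ ∑_i (c₁ x_i x_m/δ) e_i
+ (c₂ + c₃ x_n G) e_m + ( x_m G (4κ c₁ |x'|²/δ + c₄) + c₅ x_m x_n G² ) e_n ]`. -/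
def uRot (d : ℕ) (κ ε c1 c2 c3 c4 c5 : ℝ) (m : Fin d)
    (x : EuclideanSpace ℝ (Fin d) × ℝ) : EuclideanSpace ℝ (Fin d) × ℝ :=
  ((1 / 2 + Gf d κ ε x) • x.2 • EuclideanSpace.single m (1 : ℝ)
      + (Gf d κ ε x ^ 2 - 1 / 4) •
        ((∑ i : Fin d, (c1 * x.1 i * x.1 m / del d κ ε x.1) • EuclideanSpace.single i (1 : ℝ))
          + (c2 + c3 * x.2 * Gf d κ ε x) • EuclideanSpace.single m (1 : ℝ)),
    (1 / 2 + Gf d κ ε x) * (-(x.1 m))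
      + (Gf d κ ε x ^ 2 - 1 / 4) *
        (x.1 m * Gf d κ ε x * (4 * κ * c1 * ‖x.1‖ ^ 2 / del d κ ε x.1 + c4)
          + c5 * x.1 m * x.2 * Gf d κ ε x ^ 2))

variable {X : Type*} [NormedAddCommGroup X] [NormedSpace ℝ X]

lemma hasFDerivAt_sq' {f : X → ℝ} {f' : X →L[ℝ] ℝ} {x : X} (hf : HasFDerivAt f f' x) :
    HasFDerivAt (fun p => f p ^ 2) ((2 * f x) • f') x := by
  have := hf.mul hf
  have h2 : (fun p => f p * f p) = fun p => f p ^ 2 := by ext p; ring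
  change HasFDerivAt (fun p => f p * f p) _ x at this
  rw [h2] at this
  refine this.congr_fderiv ?_
  ext v
  simp [two_mul]
  ring

lemma hasFDerivAt_div' {f g : X → ℝ} {f' g' : X →L[ℝ] ℝ} {x : X}
    (hf : HasFDerivAt f f' x) (hg : HasFDerivAt g g' x) (h : g x ≠ 0) :
    HasFDerivAt (fun p => f p / g p)
      ((g x)⁻¹ • f' - (f x / g x ^ 2) • g') x := by
  have hinv : HasFDerivAt (fun p => (g p)⁻¹) ((-((g x) ^ 2)⁻¹) • g') x :=
    (hasDerivAt_inv h).comp_hasFDerivAt x hg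
  have := hf.mul hinv
  have h2 : (fun p => f p * (g p)⁻¹) = fun p => f p / g p := by
    ext p; rw [div_eq_mul_inv]
  change HasFDerivAt (fun p => f p * (g p)⁻¹) _ x at this
  rw [h2] at this
  refine this.congr_fderiv ?_
  ext v
  simp [div_eq_mul_inv]
  ring

lemma normsq (d : ℕ) (y : EuclideanSpace ℝ (Fin d)) : ‖y‖ ^ 2 = ∑ i, y i ^ 2 := by
  rw [EuclideanSpace.norm_eq, Real.sq_sqrt (by positivity)]
  simp [Real.norm_eq_abs, sq_abs]

lemma sum_smul_single_apply {d : ℕ} (f : Fin d → ℝ) (k : Fin d) :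
    (∑ i, f i • EuclideanSpace.single i (1:ℝ)) k = f k := by
  have h : (∑ i, f i • EuclideanSpace.single i (1:ℝ)) k
      = ∑ i, (f i • EuclideanSpace.single i (1:ℝ)) k :=
    by rw [WithLp.ofLp_sum, Finset.sum_apply]
  rw [h]
  simp [EuclideanSpace.single_apply]

set_option maxHeartbeats 2000000 in
theorem main (d : ℕ) (κ ε : ℝ) (hκ : 0 < κ) (hε : 0 < ε) (c1 c2 c3 c4 c5 : ℝ) (m : Fin d)
    (x : EuclideanSpace ℝ (Fin d) × ℝ) :
    divg (uRot d κ ε c1 c2 c3 c4 c5 m) x =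
      (-4*κ*(x.1 m)*x.2/(ε + 2*κ*‖x.1‖^2)^2*x.2
        + 2*(x.2/(ε + 2*κ*‖x.1‖^2))*(-4*κ*(x.1 m)*x.2/(ε + 2*κ*‖x.1‖^2)^2)*(c2+c3*x.2*(x.2/(ε + 2*κ*‖x.1‖^2)))
        + ((x.2/(ε + 2*κ*‖x.1‖^2))^2-1/4)*(c1*(x.1 m)/(ε + 2*κ*‖x.1‖^2) + c3*x.2*(-4*κ*(x.1 m)*x.2/(ε + 2*κ*‖x.1‖^2)^2)))
      + (d : ℝ) * (((x.2/(ε + 2*κ*‖x.1‖^2))^2-1/4)*c1*(x.1 m)/(ε + 2*κ*‖x.1‖^2))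
      + (-8*κ*c1*(x.1 m)*x.2*(x.2/(ε + 2*κ*‖x.1‖^2))/(ε + 2*κ*‖x.1‖^2)^3
          + ((x.2/(ε + 2*κ*‖x.1‖^2))^2-1/4)*(-4*κ*c1*(x.1 m)/(ε + 2*κ*‖x.1‖^2)^2)) * ‖x.1‖^2
      + (-(x.1 m)/(ε + 2*κ*‖x.1‖^2)
          + 2*(x.2/(ε + 2*κ*‖x.1‖^2))/(ε + 2*κ*‖x.1‖^2)*((x.1 m)*(x.2/(ε + 2*κ*‖x.1‖^2))*(4*κ*c1*‖x.1‖^2/(ε + 2*κ*‖x.1‖^2)+c4) + c5*(x.1 m)*x.2*(x.2/(ε + 2*κ*‖x.1‖^2))^2)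
          + ((x.2/(ε + 2*κ*‖x.1‖^2))^2-1/4)*((x.1 m)*(4*κ*c1*‖x.1‖^2/(ε + 2*κ*‖x.1‖^2)+c4)/(ε + 2*κ*‖x.1‖^2) + c5*(x.1 m)*(x.2/(ε + 2*κ*‖x.1‖^2))^2 + 2*c5*(x.1 m)*x.2*(x.2/(ε + 2*κ*‖x.1‖^2))/(ε + 2*κ*‖x.1‖^2))) := by
  have hδpos : 0 < del d κ ε x.1 := by unfold del; positivity
  have hδne : del d κ ε x.1 ≠ 0 := ne_of_gt hδpos
  have hne : ε + 2*κ*‖x.1‖^2 ≠ 0 := hδne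
  have hx2 : HasFDerivAt (fun p : EuclideanSpace ℝ (Fin d) × ℝ => p.2)
      (ContinuousLinearMap.snd ℝ (EuclideanSpace ℝ (Fin d)) ℝ) x :=
    (ContinuousLinearMap.snd ℝ (EuclideanSpace ℝ (Fin d)) ℝ).hasFDerivAt
  have hc : ∀ j : Fin d, HasFDerivAt (fun p : EuclideanSpace ℝ (Fin d) × ℝ => p.1 j)
      ((EuclideanSpace.proj j).comp (ContinuousLinearMap.fst ℝ (EuclideanSpace ℝ (Fin d)) ℝ)) x := by
    intro j
    have h : (fun p : EuclideanSpace ℝ (Fin d) × ℝ => p.1 j) =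
        ⇑((EuclideanSpace.proj j).comp (ContinuousLinearMap.fst ℝ (EuclideanSpace ℝ (Fin d)) ℝ)) := by
      ext p; simp
    rw [h]
    exact ContinuousLinearMap.hasFDerivAt _
  have hN : HasFDerivAt (fun p : EuclideanSpace ℝ (Fin d) × ℝ => ‖p.1‖ ^ 2)
      (∑ j, (2 * x.1 j) •
        ((EuclideanSpace.proj j).comp (ContinuousLinearMap.fst ℝ (EuclideanSpace ℝ (Fin d)) ℝ))) x := by
    have h : (fun p : EuclideanSpace ℝ (Fin d) × ℝ => ‖p.1‖ ^ 2)
        = fun p : EuclideanSpace ℝ (Fin d) × ℝ => ∑ j, p.1 j ^ 2 := by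
      ext p; exact normsq d p.1
    rw [h]
    exact HasFDerivAt.fun_sum (fun j _ => hasFDerivAt_sq' (hc j))
  have hδ := (hN.const_mul (2 * κ)).const_add ε
  have hG := hasFDerivAt_div' hx2 hδ hδne
  have hA := (hG.const_add (1/2 : ℝ)).smul (hx2.smul_const (EuclideanSpace.single m (1:ℝ)))
  have hGsqm := (hasFDerivAt_sq' hG).sub_const (1/4 : ℝ)
  have hsum := HasFDerivAt.fun_sum (fun (i : Fin d) (_ : i ∈ Finset.univ) =>
    (hasFDerivAt_div' (((hc i).const_mul c1).mul (hc m)) hδ hδne).smul_const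
      (EuclideanSpace.single i (1:ℝ)))
  have hB := (((hx2.const_mul c3).mul hG).const_add c2).smul_const
      (EuclideanSpace.single m (1:ℝ))
  have hu1 := hA.add (hGsqm.smul (hsum.add hB))
  have hP1 := (hG.const_add (1/2 : ℝ)).mul ((hc m).neg)
  have hQ1 := ((hc m).mul hG).mul
    ((hasFDerivAt_div' (hN.const_mul (4 * κ * c1)) hδ hδne).add_const c4)
  have hQ2 := (((hc m).const_mul c5).mul hx2).mul (hasFDerivAt_sq' hG)
  have hu2 := hP1.add (hGsqm.mul (hQ1.add hQ2))
  have hu := HasFDerivAt.prodMk hu1 hu2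
  have hval : ∀ i : Fin d,
      (fderiv ℝ (uRot d κ ε c1 c2 c3 c4 c5 m) x (EuclideanSpace.single i 1, 0)).1 i =
      (if i = m then
        (-4*κ*(x.1 m)*x.2/(ε + 2*κ*‖x.1‖^2)^2*x.2
          + 2*(x.2/(ε + 2*κ*‖x.1‖^2))*(-4*κ*(x.1 m)*x.2/(ε + 2*κ*‖x.1‖^2)^2)*(c2+c3*x.2*(x.2/(ε + 2*κ*‖x.1‖^2)))
          + ((x.2/(ε + 2*κ*‖x.1‖^2))^2-1/4)*(c1*(x.1 m)/(ε + 2*κ*‖x.1‖^2) + c3*x.2*(-4*κ*(x.1 m)*x.2/(ε + 2*κ*‖x.1‖^2)^2)))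
       else 0)
      + ((x.2/(ε + 2*κ*‖x.1‖^2))^2-1/4)*c1*(x.1 m)/(ε + 2*κ*‖x.1‖^2)
      + (-8*κ*c1*(x.1 m)*x.2*(x.2/(ε + 2*κ*‖x.1‖^2))/(ε + 2*κ*‖x.1‖^2)^3
          + ((x.2/(ε + 2*κ*‖x.1‖^2))^2-1/4)*(-4*κ*c1*(x.1 m)/(ε + 2*κ*‖x.1‖^2)^2)) * (x.1 i)^2 := by
    intro i
    rw [show fderiv ℝ (uRot d κ ε c1 c2 c3 c4 c5 m) x = _ from hu.fderiv]
    simp only [ContinuousLinearMap.prod_apply, ContinuousLinearMap.add_apply,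
      ContinuousLinearMap.coe_sub', Pi.sub_apply, ContinuousLinearMap.coe_smul', Pi.smul_apply,
      ContinuousLinearMap.smulRight_apply, ContinuousLinearMap.coe_comp', Function.comp_apply,
      ContinuousLinearMap.coe_fst', ContinuousLinearMap.coe_snd', ContinuousLinearMap.coe_sum',
      Finset.sum_apply, PiLp.proj_apply, smul_eq_mul, PiLp.add_apply, PiLp.smul_apply,
      PiLp.sub_apply, EuclideanSpace.single_apply, map_zero, Prod.fst_zero, Prod.snd_zero,
      mul_zero, zero_mul, mul_one, add_zero, zero_add, mul_ite, ite_mul, PiLp.zero_apply,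
      sum_smul_single_apply, Finset.sum_ite_eq, Finset.sum_ite_eq', Finset.mem_univ, if_true,
      Pi.mul_apply, Pi.add_apply, Pi.neg_apply, Pi.pow_apply, Pi.smul_apply',
      ContinuousLinearMap.neg_apply]
    by_cases hi : i = m
    · subst hi
      simp only [if_pos rfl, if_true]
      field_simp
      ring
    · simp only [if_neg hi, if_neg (Ne.symm hi), zero_mul, mul_zero, add_zero, zero_add]
      field_simp
      ring
  have hval2 :
      (fderiv ℝ (uRot d κ ε c1 c2 c3 c4 c5 m) x (0, 1)).2 =
      -(x.1 m)/(ε + 2*κ*‖x.1‖^2)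
        + 2*(x.2/(ε + 2*κ*‖x.1‖^2))/(ε + 2*κ*‖x.1‖^2)*((x.1 m)*(x.2/(ε + 2*κ*‖x.1‖^2))*(4*κ*c1*‖x.1‖^2/(ε + 2*κ*‖x.1‖^2)+c4) + c5*(x.1 m)*x.2*(x.2/(ε + 2*κ*‖x.1‖^2))^2)
        + ((x.2/(ε + 2*κ*‖x.1‖^2))^2-1/4)*((x.1 m)*(4*κ*c1*‖x.1‖^2/(ε + 2*κ*‖x.1‖^2)+c4)/(ε + 2*κ*‖x.1‖^2) + c5*(x.1 m)*(x.2/(ε + 2*κ*‖x.1‖^2))^2 + 2*c5*(x.1 m)*x.2*(x.2/(ε + 2*κ*‖x.1‖^2))/(ε + 2*κ*‖x.1‖^2)) := by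
    rw [show fderiv ℝ (uRot d κ ε c1 c2 c3 c4 c5 m) x = _ from hu.fderiv]
    simp only [ContinuousLinearMap.prod_apply, ContinuousLinearMap.add_apply,
      ContinuousLinearMap.coe_sub', Pi.sub_apply, ContinuousLinearMap.coe_smul', Pi.smul_apply,
      ContinuousLinearMap.smulRight_apply, ContinuousLinearMap.coe_comp', Function.comp_apply,
      ContinuousLinearMap.coe_fst', ContinuousLinearMap.coe_snd', ContinuousLinearMap.coe_sum',
      Finset.sum_apply, PiLp.proj_apply, smul_eq_mul, PiLp.add_apply, PiLp.smul_apply,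
      PiLp.sub_apply, EuclideanSpace.single_apply, map_zero, Prod.fst_zero, Prod.snd_zero,
      mul_zero, zero_mul, mul_one, one_mul, add_zero, zero_add, mul_ite, ite_mul,
      PiLp.zero_apply, Finset.sum_const_zero, sub_zero,
      Pi.mul_apply, Pi.add_apply, Pi.neg_apply, Pi.pow_apply, Pi.smul_apply',
      ContinuousLinearMap.neg_apply]
    field_simp
    ring
  unfold divg
  rw [Finset.sum_congr rfl (fun i _ => hval i), hval2]
  rw [Finset.sum_add_distrib, Finset.sum_add_distrib, Finset.sum_ite_eq' Finset.univ m,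
    Finset.sum_const, ← Finset.mul_sum, ← normsq]
  simp only [Finset.mem_univ, if_true, Finset.card_univ, Fintype.card_fin, nsmul_eq_mul]


set_option maxHeartbeats 2000000 in
/-- Divergence formula for the auxiliary rotational field with general constants
`c₁, …, c₅`. -/
theorem divergence_of_general_rotational_field
    (n : ℕ) (hn : 2 ≤ n) (κ ε : ℝ) (hκ : 0 < κ) (hε : 0 < ε)
    (c1 c2 c3 c4 c5 : ℝ) (m : Fin (n - 1))
    (x : EuclideanSpace ℝ (Fin (n - 1)) × ℝ) :
    divg (uRot (n - 1) κ ε c1 c2 c3 c4 c5 m) x =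
      -(1 + (c1 * (n : ℝ) + c4) / 4) * x.1 m / del (n - 1) κ ε x.1
        + (c1 * (n : ℝ) + 3 * c4 - 8 * κ * c2) * x.1 m * Gf (n - 1) κ ε x ^ 2
            / del (n - 1) κ ε x.1
        - (4 * κ + (3 * c5 - 4 * κ * c3) / 4) * x.1 m * Gf (n - 1) κ ε x ^ 2
        + (5 * c5 - 12 * κ * c3) * x.1 m * Gf (n - 1) κ ε x ^ 4 := by
  rw [main (n - 1) κ ε hκ hε c1 c2 c3 c4 c5 m x]
  have h1 : ((n - 1 : ℕ) : ℝ) = (n : ℝ) - 1 := by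
    have h : (1 : ℕ) ≤ n := by omega
    rw [Nat.cast_sub h, Nat.cast_one]
  have hne : ε + 2 * κ * ‖x.1‖ ^ 2 ≠ 0 := by positivity
  rw [h1]
  unfold Gf del
  field_simp
  ring
end
end

section
/- Let κ > 0 and R_0 > 0. There exists a constant C > 0 such that for every ε ∈ (0, 1]: | ∫_{−R_0}^{R_0} dt/(ε + 2κ t^2) − π (2κ ε)^{−1/2} + (κ R_0)^{−1} | ≤ C ε. -/
open MeasureTheory

lemma arctan_cubic_bound {x : ℝ} (hx : 0 ≤ x) :
    0 ≤ x - Real.arctan x ∧ x - Real.arctan x ≤ x ^ 3 / 3 := by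
  have h1 : ∫ t in (0:ℝ)..x, (1 - (1 + t ^ 2)⁻¹) = x - Real.arctan x := by
    have hcont : Continuous fun t : ℝ => (1 + t ^ 2)⁻¹ :=
      Continuous.inv₀ (by continuity) (fun t => by positivity)
    rw [intervalIntegral.integral_sub intervalIntegrable_const
      (hcont.intervalIntegrable _ _)]
    simp [integral_inv_one_add_sq]
  constructor
  · rw [← h1]
    apply intervalIntegral.integral_nonneg hx
    intro t _
    have h2 : (0:ℝ) < 1 + t ^ 2 := by positivity
    have : (1 + t ^ 2)⁻¹ ≤ 1 := by
      rw [inv_le_one_iff₀]; right; nlinarith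
    linarith
  · have h2 : ∫ t in (0:ℝ)..x, t ^ 2 = x ^ 3 / 3 := by
      rw [integral_pow]; norm_num
    rw [← h1, ← h2]
    apply intervalIntegral.integral_mono_on hx
    · have hcont : Continuous fun t : ℝ => 1 - (1 + t ^ 2)⁻¹ :=
        continuous_const.sub (Continuous.inv₀ (by continuity) (fun t => by positivity))
      exact hcont.intervalIntegrable _ _
    · exact (continuous_pow 2).intervalIntegrable _ _
    · intro t _
      have h3 : (0:ℝ) < 1 + t ^ 2 := by positivity
      have h4 : 1 - (1 + t ^ 2)⁻¹ = t ^ 2 / (1 + t ^ 2) := by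
        field_simp; ring
      rw [h4]
      rw [div_le_iff₀ h3]
      nlinarith

/-- One-dimensional asymptotics: for `ε ∈ (0,1]`,
`∫_{−R₀}^{R₀} dt/(ε + 2κ t²) = π (2κε)^{−1/2} − (κR₀)^{−1} + O(ε)`. -/
theorem one_dimensional_gap_integral_asymptotics
    (κ R0 : ℝ) (hκ : 0 < κ) (hR0 : 0 < R0) :
    ∃ C > 0, ∀ ε : ℝ, 0 < ε → ε ≤ 1 →
      |(∫ t in Set.Icc (-R0) R0, (ε + 2 * κ * t ^ 2)⁻¹)
          - Real.pi * (2 * κ * ε) ^ (-(1 : ℝ) / 2) + (κ * R0)⁻¹| ≤ C * ε := by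
  refine ⟨1 / (6 * κ ^ 2 * R0 ^ 3), by positivity, fun ε hε hε1 => ?_⟩
  set s := Real.sqrt ε with hs_def
  set a := Real.sqrt (2 * κ) with ha_def
  have hs : 0 < s := Real.sqrt_pos.mpr hε
  have ha : 0 < a := Real.sqrt_pos.mpr (by linarith)
  have hs2 : s ^ 2 = ε := Real.sq_sqrt hε.le
  have ha2 : a ^ 2 = 2 * κ := Real.sq_sqrt (by linarith)
  set c := a / s with hc_def
  have hc : 0 < c := by positivity
  have hc2 : c ^ 2 = 2 * κ / ε := by
    rw [hc_def, div_pow, hs2, ha2]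
  -- compute the integral
  have key : ∀ t : ℝ, (ε + 2 * κ * t ^ 2)⁻¹ = ε⁻¹ * (1 + (c * t) ^ 2)⁻¹ := by
    intro t
    rw [mul_pow, hc2, ← mul_inv]
    congr 1
    field_simp
  have hI : (∫ t in Set.Icc (-R0) R0, (ε + 2 * κ * t ^ 2)⁻¹)
      = ε⁻¹ * c⁻¹ * (2 * Real.arctan (c * R0)) := by
    rw [MeasureTheory.integral_Icc_eq_integral_Ioc,
      ← intervalIntegral.integral_of_le (by linarith : -R0 ≤ R0)]
    calc (∫ t in (-R0)..R0, (ε + 2 * κ * t ^ 2)⁻¹)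
        = ∫ t in (-R0)..R0, ε⁻¹ * (1 + (c * t) ^ 2)⁻¹ := by
          simp only [key]
      _ = ε⁻¹ * ∫ t in (-R0)..R0, (1 + (c * t) ^ 2)⁻¹ := by
          rw [intervalIntegral.integral_const_mul]
      _ = ε⁻¹ * (c⁻¹ • ∫ t in (c * -R0)..(c * R0), (1 + t ^ 2)⁻¹) := by
          rw [intervalIntegral.integral_comp_mul_left (fun x => ((1:ℝ) + x ^ 2)⁻¹) hc.ne']
      _ = ε⁻¹ * c⁻¹ * (2 * Real.arctan (c * R0)) := by
          rw [integral_inv_one_add_sq]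
          rw [mul_neg, Real.arctan_neg]
          simp [smul_eq_mul]
          ring
  -- rewrite the rpow
  have hrpow : (2 * κ * ε) ^ (-(1 : ℝ) / 2) = (a * s)⁻¹ := by
    rw [show (-(1:ℝ)/2) = -(1/2) by ring, Real.rpow_neg (by positivity),
      ← Real.sqrt_eq_rpow, Real.sqrt_mul (by linarith) ε]
  -- arctan flip
  have hflip : Real.arctan (c * R0) = Real.pi / 2 - Real.arctan (c * R0)⁻¹ := by
    have := Real.arctan_inv_of_pos (mul_pos hc hR0)
    linarith
  set u := (c * R0)⁻¹ with hu_def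
  have hu : 0 < u := by positivity
  obtain ⟨hb1, hb2⟩ := arctan_cubic_bound hu.le
  have hεc : ε * c = a * s := by
    rw [hc_def, ← hs2]; field_simp
  have hmain : (∫ t in Set.Icc (-R0) R0, (ε + 2 * κ * t ^ 2)⁻¹)
      - Real.pi * (2 * κ * ε) ^ (-(1 : ℝ) / 2) + (κ * R0)⁻¹
      = (2 / (a * s)) * (u - Real.arctan u) := by
    rw [hI, hrpow, hflip]
    have h1 : ε⁻¹ * c⁻¹ = (a * s)⁻¹ := by rw [← mul_inv, hεc]
    rw [h1]
    have h2 : (κ * R0)⁻¹ = (2 / (a * s)) * u := by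
      rw [hu_def, hc_def]
      field_simp
      linear_combination ha2
    rw [h2]
    field_simp
    ring
  rw [hmain]
  rw [abs_mul, abs_of_nonneg (by positivity : (0:ℝ) ≤ 2 / (a * s)),
    abs_of_nonneg hb1]
  have hub : u ^ 3 = s ^ 3 / (a ^ 3 * R0 ^ 3) := by
    rw [hu_def, hc_def]
    field_simp
  calc 2 / (a * s) * (u - Real.arctan u) ≤ 2 / (a * s) * (u ^ 3 / 3) := by
        apply mul_le_mul_of_nonneg_left hb2 (by positivity)
    _ = 2 * s ^ 2 / (3 * (a ^ 2) ^ 2 * R0 ^ 3) := by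
        rw [hub]; field_simp
    _ = 1 / (6 * κ ^ 2 * R0 ^ 3) * ε := by
        rw [ha2, hs2]; field_simp; ring
end
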